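/- arXiv:2212.06279 — 2 statements merged into one kernel-verified Lean document; each statement's English description precedes it below -/
import Mathlib

section
/- Let P be an N×N doubly stochastic matrix with positive diagonal and connected support graph, and let β = min{P_{ij} : P_{ij} > 0}. Then for every t ≥ 1 and all indices i, j, |[Pᵗ]_{ij} − 1/N| ≤ 2(1 + β^{−N})(1 − β^{N})^{t/N − 1}. -/
/-!
Since `P` is doubly stochastic, as much mass leaves any set of states as enters it, so
connectivity of the support graph forces an edge out of every proper nonempty set. With the
positive diagonal, the set of states reachable from `i` in `m` steps therefore grows until it is
everything, so all entries of `P ^ N` are positive, hence at least `δ = β ^ N`. Doeblin's argument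
then shows that `P ^ N` contracts the oscillation `max - min` of every column of `P ^ t` by the
factor `1 - N δ ≤ 1 - δ`, and `1 / N`, the mean of a column, lies within that oscillation of each
of its entries.
-/

open Finset Matrix

namespace Matrix

variable {ι : Type*} [Fintype ι]

theorem mulVec_sub_mulVec_le {Q : Matrix ι ι ℝ} (hQ : ∀ i, ∑ j, Q i j = 1) {δ r : ℝ}
    (hδ : ∀ i j, δ ≤ Q i j) {v : ι → ℝ} (hv : ∀ a b, v a - v b ≤ r) (i i' : ι) :
    (Q *ᵥ v) i - (Q *ᵥ v) i' ≤ (1 - Fintype.card ι * δ) * r := by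
  have : Nonempty ι := ⟨i⟩
  obtain ⟨k, hk⟩ := Finite.exists_min v
  calc (Q *ᵥ v) i - (Q *ᵥ v) i' = ∑ j, (Q i j - Q i' j) * (v j - v k) := by
        simp only [mulVec, dotProduct, sub_mul, mul_sub, sum_sub_distrib, ← sum_mul, hQ]
        ring
    _ ≤ ∑ j, (Q i j - δ) * r := by
        gcongr with j
        · linarith [hδ i' j, hk j]
        · linarith [hδ i j]
        · linarith [hδ i' j]
        · exact hv j k
    _ = (1 - Fintype.card ι * δ) * r := by
        rw [← sum_mul, sum_sub_distrib, hQ, sum_const, card_univ, nsmul_eq_mul]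

theorem abs_sub_sum_div_card_le {v : ι → ℝ} {r : ℝ} (hv : ∀ a b, v a - v b ≤ r) (i : ι) :
    |v i - (∑ a, v a) / Fintype.card ι| ≤ r := by
  have hcard : (0 : ℝ) < Fintype.card ι := Nat.cast_pos.2 (Fintype.card_pos_iff.2 ⟨i⟩)
  have hsum : ∀ c : ℝ, ∑ _a : ι, c = Fintype.card ι * c := fun c => by
    rw [sum_const, card_univ, nsmul_eq_mul]
  have hdev : v i - (∑ a, v a) / Fintype.card ι = (∑ a, (v i - v a)) / Fintype.card ι := by
    rw [sum_sub_distrib, hsum]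
    field_simp
  calc |v i - (∑ a, v a) / Fintype.card ι| = |∑ a, (v i - v a)| / Fintype.card ι := by
        rw [hdev, abs_div, abs_of_pos hcard]
    _ ≤ (∑ a, |v i - v a|) / Fintype.card ι := by gcongr; exact abs_sum_le_sum_abs _ _
    _ ≤ (∑ _a : ι, r) / Fintype.card ι := by
        gcongr with a
        exact abs_sub_le_iff.2 ⟨hv i a, hv a i⟩
    _ = r := by
        rw [hsum]
        field_simp

variable [DecidableEq ι]

theorem sum_sum_compl_eq_sum_compl_sum {P : Matrix ι ι ℝ} (hP : P ∈ doublyStochastic ℝ ι)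
    (S : Finset ι) : ∑ a ∈ S, ∑ b ∈ Sᶜ, P a b = ∑ a ∈ Sᶜ, ∑ b ∈ S, P a b := by
  have hrows : ∑ a ∈ S, ∑ b, P a b = ∑ a ∈ S, ∑ b ∈ S, P a b + ∑ a ∈ S, ∑ b ∈ Sᶜ, P a b := by
    simp only [← sum_add_distrib, sum_add_sum_compl]
  have hcols : ∑ b ∈ S, ∑ a, P a b = ∑ a ∈ S, ∑ b ∈ S, P a b + ∑ a ∈ Sᶜ, ∑ b ∈ S, P a b := by
    rw [sum_comm (s := S) (t := S) (f := fun a b => P a b),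
      sum_comm (s := Sᶜ) (t := S) (f := fun a b => P a b), ← sum_add_distrib]
    simp only [sum_add_sum_compl]
  simp only [sum_row_of_mem_doublyStochastic hP, sum_col_of_mem_doublyStochastic hP] at hrows hcols
  linarith

theorem exists_pos_apply_of_connected {P : Matrix ι ι ℝ} (hP : P ∈ doublyStochastic ℝ ι)
    {G : SimpleGraph ι} (hG : G.Connected) (hGP : ∀ a b, G.Adj a b → 0 < P a b ∨ 0 < P b a)
    {S : Finset ι} (hS : S.Nonempty) (hSu : S ≠ univ) : ∃ a ∈ S, ∃ b ∉ S, 0 < P a b := by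
  by_contra! hout
  have hout' : ∀ a ∈ S, ∀ b ∉ S, P a b = 0 := fun a ha b hb =>
    (hout a ha b hb).antisymm (nonneg_of_mem_doublyStochastic hP)
  have hin : ∀ a ∉ S, ∀ b ∈ S, P a b = 0 := by
    have h := sum_sum_compl_eq_sum_compl_sum hP S
    rw [sum_eq_zero fun a ha => sum_eq_zero fun b hb => hout' a ha b (mem_compl.1 hb),
      eq_comm, sum_eq_zero_iff_of_nonneg fun a _ => sum_nonneg fun b _ =>
        nonneg_of_mem_doublyStochastic hP] at h
    intro a ha b hb
    exact (sum_eq_zero_iff_of_nonneg fun b _ => nonneg_of_mem_doublyStochastic hP).1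
      (h a (mem_compl.2 ha)) b hb
  obtain ⟨u, hu⟩ := hS
  obtain ⟨v, hv⟩ : ∃ v, v ∉ S := by simpa [eq_univ_iff_forall] using hSu
  obtain ⟨d, -, hd₁, hd₂⟩ := (hG.preconnected u v).some.exists_boundary_dart (S : Set ι) hu hv
  rcases hGP _ _ d.adj with h | h
  · exact h.ne' (hout' _ hd₁ _ hd₂)
  · exact h.ne' (hin _ hd₂ _ hd₁)

theorem pow_succ_apply_pos {P : Matrix ι ι ℝ} (hP : ∀ i j, 0 ≤ P i j) {m : ℕ} {i a b : ι}
    (hia : 0 < (P ^ m) i a) (hab : 0 < P a b) : 0 < (P ^ (m + 1)) i b := by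
  rw [pow_succ, mul_apply]
  exact (sum_pos_iff_of_nonneg fun k _ => mul_nonneg (pow_apply_nonneg hP m i k) (hP k b)).2
    ⟨a, mem_univ a, mul_pos hia hab⟩

theorem pow_card_apply_pos {P : Matrix ι ι ℝ} (hP : P ∈ doublyStochastic ℝ ι)
    (hdiag : ∀ i, 0 < P i i) {G : SimpleGraph ι} (hG : G.Connected)
    (hGP : ∀ a b, G.Adj a b → 0 < P a b ∨ 0 < P b a) (i j : ι) :
    0 < (P ^ Fintype.card ι) i j := by
  have hP₀ : ∀ a b, 0 ≤ P a b := fun a b => nonneg_of_mem_doublyStochastic hP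
  let S : ℕ → Finset ι := fun m => {k | 0 < (P ^ m) i k}
  have hgrow : ∀ m, S m = univ ∨ m < #(S m) := by
    intro m
    induction m with
    | zero => exact .inr (card_pos.2 ⟨i, by simp [S]⟩)
    | succ m ih =>
      have hmono : S m ⊆ S (m + 1) := fun k hk => by
        simp only [S, mem_filter_univ] at hk ⊢
        exact pow_succ_apply_pos hP₀ hk (hdiag k)
      by_cases hu : S m = univ
      · exact .inl (univ_subset_iff.1 (hu ▸ hmono))
      have hcard := ih.resolve_left hu
      obtain ⟨a, ha, b, hb, hab⟩ :=
        exists_pos_apply_of_connected hP hG hGP (card_pos.1 (by omega)) hu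
      have hbS : b ∈ S (m + 1) := by
        simp only [S, mem_filter_univ] at ha ⊢
        exact pow_succ_apply_pos hP₀ ha hab
      have := card_lt_card (Finset.ssubset_iff_subset_ne.2 ⟨hmono, fun h => hb (h ▸ hbS)⟩)
      exact .inr (by omega)
  have hS : S (Fintype.card ι) = univ :=
    (hgrow _).resolve_right fun h => (card_le_univ _).not_gt h
  simpa [S] using hS.ge (mem_univ j)

theorem pow_le_pow_apply_of_pos {P : Matrix ι ι ℝ} (hP : ∀ i j, 0 ≤ P i j) {β : ℝ} (hβ : 0 ≤ β)
    (hβP : ∀ i j, 0 < P i j → β ≤ P i j) (m : ℕ) {i j : ι} (hij : 0 < (P ^ m) i j) :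
    β ^ m ≤ (P ^ m) i j := by
  induction m generalizing j with
  | zero =>
    rcases eq_or_ne i j with rfl | h
    · simp
    · simp [one_apply_ne h] at hij
  | succ m ih =>
    have hterm : ∀ k ∈ univ, 0 ≤ (P ^ m) i k * P k j := fun k _ =>
      mul_nonneg (pow_apply_nonneg hP m i k) (hP k j)
    rw [pow_succ P m, mul_apply] at hij ⊢
    obtain ⟨k, hk, hpos⟩ := (sum_pos_iff_of_nonneg hterm).1 hij
    have hk₁ : 0 < (P ^ m) i k := pos_of_mul_pos_left hpos (hP k j)
    have hk₂ : 0 < P k j := pos_of_mul_pos_right hpos (pow_apply_nonneg hP m i k)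
    calc β ^ (m + 1) = β ^ m * β := pow_succ β m
      _ ≤ (P ^ m) i k * P k j := mul_le_mul (ih hk₁) (hβP k j hk₂) hβ hk₁.le
      _ ≤ ∑ l, (P ^ m) i l * P l j := single_le_sum hterm hk

theorem pow_apply_sub_pow_apply_le {P : Matrix ι ι ℝ} (hP : P ∈ rowStochastic ℝ ι) {n : ℕ}
    {δ : ℝ} (hδ : ∀ i j, δ ≤ (P ^ n) i j) (t : ℕ) (i i' j : ι) :
    (P ^ t) i j - (P ^ t) i' j ≤ (1 - Fintype.card ι * δ) ^ (t / n) := by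
  suffices h : ∀ k r i i', (P ^ (n * k + r)) i j - (P ^ (n * k + r)) i' j
      ≤ (1 - Fintype.card ι * δ) ^ k by
    simpa only [Nat.div_add_mod] using h (t / n) (t % n) i i'
  intro k r
  induction k with
  | zero =>
    intro i i'
    have hPr := pow_mem hP r
    simpa using sub_le_sub (le_one_of_mem_rowStochastic hPr (i := i) (j := j))
      (nonneg_of_mem_rowStochastic hPr (i := i') (j := j))
  | succ k ih =>
    intro i i'
    rw [show n * (k + 1) + r = n + (n * k + r) by ring, pow_add, pow_succ']
    exact (mulVec_sub_mulVec_le (sum_row_of_mem_rowStochastic (pow_mem hP n)) hδ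
      ih i i').trans_eq (by ring)

end Matrix

-- The real power `0 ^ x` is `0` for every `x ≠ 0`, negative ones included, so for `a = 0` the
-- left side has to vanish as well.
theorem pow_div_le_rpow_div_sub_one {a : ℝ} (ha₀ : 0 ≤ a) (ha₁ : a ≤ 1) {t n : ℕ} (hn : 0 < n)
    (ht : a = 0 → n ≤ t) : a ^ (t / n) ≤ a ^ ((t : ℝ) / n - 1) := by
  rcases ha₀.eq_or_lt with rfl | ha
  · rw [zero_pow (Nat.div_pos (ht rfl) hn).ne']
    exact Real.rpow_nonneg le_rfl _
  · rw [← Real.rpow_natCast]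
    refine Real.rpow_le_rpow_of_exponent_ge ha ha₁ ?_
    have := Nat.lt_floor_add_one ((t : ℝ) / n)
    rw [Nat.floor_div_eq_div] at this
    linarith

theorem stmt_6_general (N : ℕ) (P : Matrix (Fin N) (Fin N) ℝ)
    (hnonneg : ∀ i j, 0 ≤ P i j)
    (hrow : ∀ i, ∑ j, P i j = 1)
    (hcol : ∀ j, ∑ i, P i j = 1)
    (hdiag : ∀ i, 0 < P i i)
    (hconn : (SimpleGraph.mk (fun i j => i ≠ j ∧ (0 < P i j ∨ 0 < P j i))
      ⟨fun i j h => ⟨h.1.symm, h.2.symm⟩⟩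
      ⟨fun i h => h.1 rfl⟩).Connected)
    (β : ℝ) (hβpos : 0 < β)
    (hβle : ∀ i j, 0 < P i j → β ≤ P i j) :
    ∀ t : ℕ, 1 ≤ t → ∀ i j,
      |(P ^ t) i j - 1 / N| ≤
        2 * (1 + β⁻¹ ^ N) * Real.rpow (1 - β ^ N) ((t : ℝ) / N - 1) := by
  intro t ht i j
  have hP : P ∈ doublyStochastic ℝ (Fin N) := mem_doublyStochastic_iff_sum.2 ⟨hnonneg, hrow, hcol⟩
  have hN : (1 : ℝ) ≤ N := Nat.one_le_cast.2 i.pos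
  set δ := β ^ N
  have hδ₀ : 0 ≤ δ := by positivity
  have hδ : ∀ a b, δ ≤ (P ^ N) a b := fun a b => by
    simpa using pow_le_pow_apply_of_pos hnonneg hβpos.le hβle N
      (by simpa using pow_card_apply_pos hP hdiag hconn (fun a b h => h.2) a b)
  have hNδ : N * δ ≤ 1 := by
    simpa [sum_row_of_mem_doublyStochastic (pow_mem hP N)] using
      sum_le_sum fun b (_ : b ∈ univ) => hδ i b
  have hδN : δ ≤ N * δ := le_mul_of_one_le_left hδ₀ hN
  calc |(P ^ t) i j - 1 / N| ≤ (1 - N * δ) ^ (t / N) := by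
        simpa [sum_col_of_mem_doublyStochastic (pow_mem hP t)] using
          abs_sub_sum_div_card_le (pow_apply_sub_pow_apply_le
            (mem_rowStochastic_iff_sum.2 ⟨hnonneg, hrow⟩) hδ t · · j) i
    -- unlike `1 - N δ`, the base `1 - δ` can vanish only when `N = 1`
    _ ≤ (1 - δ) ^ (t / N) := pow_le_pow_left₀ (by linarith) (by linarith) _
    _ ≤ (1 - δ) ^ ((t : ℝ) / N - 1) := by
        refine pow_div_le_rpow_div_sub_one (by linarith) (by linarith) i.pos fun h => ?_
        have : (N : ℝ) ≤ 1 := by nlinarith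
        exact (Nat.cast_le_one.1 this).trans ht
    _ ≤ _ := le_mul_of_one_le_left (Real.rpow_nonneg (by linarith) _)
        (by linarith [pow_nonneg (inv_nonneg.2 hβpos.le) N])

/-- Geometric convergence rate for powers of a doubly stochastic matrix with positive
diagonal and connected support graph: with `β` the smallest positive entry of `P`,
`|[Pᵗ]_{ij} − 1/N| ≤ 2 (1 + β^{−N}) (1 − β^N)^{t/N − 1}`. -/
theorem stmt_6 (N : ℕ) (hN : 0 < N) (P : Matrix (Fin N) (Fin N) ℝ)
    (hnonneg : ∀ i j, 0 ≤ P i j)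
    (hrow : ∀ i, ∑ j, P i j = 1)
    (hcol : ∀ j, ∑ i, P i j = 1)
    (hdiag : ∀ i, 0 < P i i)
    (hconn : (SimpleGraph.mk (fun i j => i ≠ j ∧ (0 < P i j ∨ 0 < P j i))
      ⟨fun i j h => ⟨h.1.symm, h.2.symm⟩⟩
      ⟨fun i h => h.1 rfl⟩).Connected)
    (β : ℝ) (hβpos : 0 < β)
    (hβle : ∀ i j, 0 < P i j → β ≤ P i j)
    (hβmem : ∃ i j, P i j = β) :
    ∀ t : ℕ, 1 ≤ t → ∀ i j,
      |(P ^ t) i j - 1 / N| ≤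
        2 * (1 + β⁻¹ ^ N) * Real.rpow (1 - β ^ N) ((t : ℝ) / N - 1) :=
  stmt_6_general N P hnonneg hrow hcol hdiag hconn β hβpos hβle
end

section
/- Regret decomposition: in the multi-player bandit with N players and K arms and mean rewards μ₁ > μ₂ > ⋯ > μ_K in (0,1], the regret R(T) = R* − ΣₖμₖE[Vₖ(T)] satisfies R(T) ≤ μ₁·(Σ_{k∈K_b} E[Cₖ(T)] + Σ_{k∈K_{−b}} E[Iₖ(T)]), where K_b is the set of the N best arms, K_{−b} its complement, Iₖ(T) the total number of pulls of arm k, Vₖ(T) the number of collision-free pulls of arm k, Cₖ(T) = Iₖ(T) − Vₖ(T), and R* ≤ T·Σ_{k∈K_b} μₖ. -/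
open Finset

/-- Regret decomposition for the multi-player bandit: the regret is bounded by
`μ₁` times (expected collisions on the `N` best arms plus expected pulls of the
`K − N` worst arms). -/
theorem stmt_10 (N K T : ℕ) (hN : 0 < N) (hNK : N ≤ K) (hK : 0 < K)
    (μ : Fin K → ℝ)
    (hmono : ∀ i j : Fin K, i < j → μ j < μ i)
    (hpos : ∀ k, 0 < μ k) (hle1 : ∀ k, μ k ≤ 1)
    (EI EV : Fin K → ℝ)
    (hVI : ∀ k, EV k ≤ EI k) (hV0 : ∀ k, 0 ≤ EV k) (hVT : ∀ k, EV k ≤ (T : ℝ))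
    (hsum : ∑ k, EI k = (T : ℝ) * N)
    (Rstar : ℝ)
    (hRstar : Rstar ≤ (T : ℝ) * ∑ k ∈ Finset.univ.filter (fun k : Fin K => (k : ℕ) < N), μ k) :
    Rstar - ∑ k, μ k * EV k ≤
      μ ⟨0, hK⟩ *
        ((∑ k ∈ Finset.univ.filter (fun k : Fin K => (k : ℕ) < N), (EI k - EV k)) +
          ∑ k ∈ Finset.univ.filter (fun k : Fin K => ¬ (k : ℕ) < N), EI k) := by
  set B := Finset.univ.filter (fun k : Fin K => (k : ℕ) < N) with hB
  set Bc := Finset.univ.filter (fun k : Fin K => ¬ (k : ℕ) < N) with hBc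
  have hmu0 : ∀ k : Fin K, μ k ≤ μ ⟨0, hK⟩ := by
    intro k
    rcases Nat.eq_zero_or_pos (k : ℕ) with h | h
    · have : k = ⟨0, hK⟩ := by ext; simpa using h
      rw [this]
    · exact le_of_lt (hmono ⟨0, hK⟩ k h)
  have hcard : B.card = N := by
    rw [hB]
    have : Finset.univ.filter (fun k : Fin K => (k : ℕ) < N)
        = (Finset.range N).attachFin (fun m hm => lt_of_lt_of_le (Finset.mem_range.mp hm) hNK) := by
      ext k
      simp [Finset.mem_attachFin]
    rw [this, Finset.card_attachFin, Finset.card_range]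
  have hsplitI : ∑ k ∈ B, EI k + ∑ k ∈ Bc, EI k = (T : ℝ) * N := by
    rw [← hsum, hB, hBc]
    exact Finset.sum_filter_add_sum_filter_not _ _ _
  have hsplitV : ∑ k ∈ B, μ k * EV k + ∑ k ∈ Bc, μ k * EV k = ∑ k, μ k * EV k := by
    rw [hB, hBc]; exact Finset.sum_filter_add_sum_filter_not _ _ _
  have hTB : ∑ k ∈ B, (T : ℝ) = (T : ℝ) * N := by
    rw [Finset.sum_const, hcard]; push_cast; ring
  have step1 : (T : ℝ) * ∑ k ∈ B, μ k - ∑ k, μ k * EV k ≤ ∑ k ∈ B, μ k * ((T : ℝ) - EV k) := by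
    have h1 : ∑ k ∈ B, μ k * ((T : ℝ) - EV k)
        = (T : ℝ) * ∑ k ∈ B, μ k - ∑ k ∈ B, μ k * EV k := by
      rw [Finset.mul_sum, ← Finset.sum_sub_distrib]
      exact Finset.sum_congr rfl fun k _ => by ring
    have h2 : 0 ≤ ∑ k ∈ Bc, μ k * EV k :=
      Finset.sum_nonneg fun k _ => mul_nonneg (hpos k).le (hV0 k)
    linarith
  have step2 : ∑ k ∈ B, μ k * ((T : ℝ) - EV k) ≤ μ ⟨0, hK⟩ * ∑ k ∈ B, ((T : ℝ) - EV k) := by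
    rw [Finset.mul_sum]
    exact Finset.sum_le_sum fun k _ =>
      mul_le_mul_of_nonneg_right (hmu0 k) (by linarith [hVT k])
  have step3 : ∑ k ∈ B, ((T : ℝ) - EV k)
      = (∑ k ∈ B, (EI k - EV k)) + ∑ k ∈ Bc, EI k := by
    rw [Finset.sum_sub_distrib, Finset.sum_sub_distrib, hTB]
    linarith
  calc Rstar - ∑ k, μ k * EV k
      ≤ (T : ℝ) * ∑ k ∈ B, μ k - ∑ k, μ k * EV k := by linarith
    _ ≤ ∑ k ∈ B, μ k * ((T : ℝ) - EV k) := step1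
    _ ≤ μ ⟨0, hK⟩ * ∑ k ∈ B, ((T : ℝ) - EV k) := step2
    _ = _ := by rw [step3]
end
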